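/- (Bound for A3 in the proof of Theorem 2) Assume the stability bounds (NE1) and (NE2) with constants 0 < λ_min ≤ λ_max, so that P is bijective. Let e ∈ V, let 1 ≤ p ≤ n+1, and let I be a uniform random subset of size p of {0,1,…,n}. Set D = Σ_{i∈I} ω_i R_i T_i e (a random element of V). Then E(a(P^{-1}D, D)) ≤ (p/(n+1)) a(Pe, e). -/
import Mathlib

open scoped RealInnerProductSpace

lemma bound_A3_count {n p : ℕ} (hp1 : 1 ≤ p) (i : Fin (n+1)) :
    ((Finset.powersetCard p (Finset.univ : Finset (Fin (n+1)))).filter (fun I => i ∈ I)).card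
      = n.choose (p-1) := by
  have h : ((Finset.powersetCard p (Finset.univ : Finset (Fin (n+1)))).filter (fun I => i ∈ I)).card
      = (Finset.powersetCard (p-1) ((Finset.univ : Finset (Fin (n+1))).erase i)).card := by
    refine Finset.card_bij' (fun I _ => I.erase i) (fun J _ => insert i J) ?_ ?_ ?_ ?_
    · intro I hI
      simp only [Finset.mem_filter, Finset.mem_powersetCard] at hI
      simp only [Finset.mem_powersetCard]
      constructor
      · exact fun x hx => Finset.mem_erase.2 ⟨(Finset.mem_erase.1 hx).1, Finset.mem_univ x⟩
      · rw [Finset.card_erase_of_mem hI.2, hI.1.2]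
    · intro J hJ
      simp only [Finset.mem_powersetCard] at hJ
      simp only [Finset.mem_filter, Finset.mem_powersetCard]
      have hiJ : i ∉ J := fun h => (Finset.mem_erase.1 (hJ.1 h)).1 rfl
      refine ⟨⟨fun x _ => Finset.mem_univ x, ?_⟩, Finset.mem_insert_self i J⟩
      rw [Finset.card_insert_of_notMem hiJ, hJ.2]
      omega
    · intro I hI
      simp only [Finset.mem_filter] at hI
      exact Finset.insert_erase hI.2
    · intro J hJ
      simp only [Finset.mem_powersetCard] at hJ
      have hiJ : i ∉ J := fun h => (Finset.mem_erase.1 (hJ.1 h)).1 rfl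
      exact Finset.erase_insert hiJ
  rw [h, Finset.card_powersetCard, Finset.card_erase_of_mem (Finset.mem_univ i),
    Finset.card_univ, Fintype.card_fin]
  simp

lemma bound_A3_aux {t S c A : ℝ} (ht0 : 0 ≤ t) (hS0 : 0 ≤ S) (hCS : t ≤ c)
    (hA : A ≤ t) (h2 : c ^ 2 ≤ A * S) : t ≤ S := by
  rcases eq_or_lt_of_le ht0 with h0 | h0
  · rw [← h0]; exact hS0
  · have h1 : t ^ 2 ≤ c ^ 2 := pow_le_pow_left₀ h0.le hCS 2
    have h3 : c ^ 2 ≤ t * S := le_trans h2 (mul_le_mul_of_nonneg_right hA hS0)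
    nlinarith

set_option maxHeartbeats 1000000 in
/-- **bound for A3 in the proof of Theorem 2.** Assume (NE1), (NE2) with
`0 < λ_min ≤ λ_max`, so that the additive Schwarz operator `P` is bijective, with
(two-sided) inverse `Q = P⁻¹`. For `e ∈ V`, a uniform random subset `I` of size `p` of
`{0,…,n}`, and `D = ∑_{i∈I} ω_i R_i T_i e`, one has
`E(a(P⁻¹D, D)) ≤ (p/(n+1)) a(Pe, e)`. -/
theorem bound_A3
    {V : Type*} [NormedAddCommGroup V] [InnerProductSpace ℝ V] [CompleteSpace V]
    {n : ℕ} {W : Fin (n + 1) → Type*}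
    [∀ i, NormedAddCommGroup (W i)] [∀ i, InnerProductSpace ℝ (W i)]
    [∀ i, CompleteSpace (W i)]
    (R : ∀ i, W i →L[ℝ] V) (ω : Fin (n + 1) → ℝ) (hω : ∀ i, 0 < ω i)
    (lmin lmax : ℝ) (hlmin : 0 < lmin) (hminmax : lmin ≤ lmax)
    (hNE1 : ∀ v : V,
      lmin * ‖v‖ ^ 2 ≤ ⟪(∑ i, ω i • R i ((ContinuousLinearMap.adjoint (R i)) v)), v⟫)
    (hNE2 : ∀ w : ∀ i, W i,
      ‖∑ i, ω i • R i (w i)‖ ^ 2 ≤ lmax * ∑ i, ω i * ‖w i‖ ^ 2)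
    (Q : V →L[ℝ] V)
    (hPQ : ∀ v : V, (∑ i, ω i • R i ((ContinuousLinearMap.adjoint (R i)) (Q v))) = v)
    (hQP : ∀ v : V, Q (∑ i, ω i • R i ((ContinuousLinearMap.adjoint (R i)) v)) = v)
    (e : V) (p : ℕ) (hp1 : 1 ≤ p) (hp2 : p ≤ n + 1)
    (D : Finset (Fin (n + 1)) → V)
    (hD : ∀ I, D I = ∑ i ∈ I, ω i • R i ((ContinuousLinearMap.adjoint (R i)) e)) :
    (((n + 1).choose p : ℝ))⁻¹ *
        ∑ I ∈ Finset.powersetCard p (Finset.univ : Finset (Fin (n + 1))),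
          ⟪Q (D I), D I⟫ ≤
      ((p : ℝ) / (n + 1)) *
        ⟪(∑ i, ω i • R i ((ContinuousLinearMap.adjoint (R i)) e)), e⟫ := by
  have key_inner : ∀ (i : Fin (n+1)) (u : W i) (v : V),
      ⟪R i u, v⟫ = ⟪u, (ContinuousLinearMap.adjoint (R i)) v⟫ :=
    fun i u v => (ContinuousLinearMap.adjoint_inner_right (R i) u v).symm
  -- Step A: ⟪Pv, v⟫ = ∑ ω_i ‖T_i v‖²
  have stepA : ∀ v : V, ⟪(∑ i, ω i • R i ((ContinuousLinearMap.adjoint (R i)) v)), v⟫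
      = ∑ i, ω i * ‖(ContinuousLinearMap.adjoint (R i)) v‖ ^ 2 := by
    intro v
    rw [sum_inner]
    refine Finset.sum_congr rfl fun i _ => ?_
    rw [real_inner_smul_left, key_inner i _ v, real_inner_self_eq_norm_sq]
  have hf0 : ∀ i, (0:ℝ) ≤ ω i * ‖(ContinuousLinearMap.adjoint (R i)) e‖ ^ 2 :=
    fun i => mul_nonneg (hω i).le (sq_nonneg _)
  -- Step B: per-subset bound
  have stepB : ∀ I : Finset (Fin (n+1)), ⟪Q (D I), D I⟫
      ≤ ∑ i ∈ I, ω i * ‖(ContinuousLinearMap.adjoint (R i)) e‖ ^ 2 := by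
    intro I
    have hPw : (∑ i, ω i • R i ((ContinuousLinearMap.adjoint (R i)) (Q (D I)))) = D I :=
      hPQ (D I)
    have hPww : ∑ i, ω i * ‖(ContinuousLinearMap.adjoint (R i)) (Q (D I))‖ ^ 2
        = ⟪Q (D I), D I⟫ := by
      rw [← stepA (Q (D I)), hPw, real_inner_comm]
    have ht_eq' : ∀ v : V, ⟪v, D I⟫ = ∑ i ∈ I,
        ω i * ⟪(ContinuousLinearMap.adjoint (R i)) v,
               (ContinuousLinearMap.adjoint (R i)) e⟫ := by
      intro v
      rw [hD, inner_sum]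
      refine Finset.sum_congr rfl fun i _ => ?_
      rw [real_inner_smul_right]
      congr 1
      calc ⟪v, R i ((ContinuousLinearMap.adjoint (R i)) e)⟫
          = ⟪R i ((ContinuousLinearMap.adjoint (R i)) e), v⟫ := real_inner_comm _ _
        _ = ⟪(ContinuousLinearMap.adjoint (R i)) e,
              (ContinuousLinearMap.adjoint (R i)) v⟫ := key_inner i _ v
        _ = ⟪(ContinuousLinearMap.adjoint (R i)) v,
              (ContinuousLinearMap.adjoint (R i)) e⟫ := real_inner_comm _ _
    have ht_eq : ⟪Q (D I), D I⟫ = ∑ i ∈ I,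
        ω i * ⟪(ContinuousLinearMap.adjoint (R i)) (Q (D I)),
               (ContinuousLinearMap.adjoint (R i)) e⟫ := ht_eq' (Q (D I))
    have ht0 : (0:ℝ) ≤ ⟪Q (D I), D I⟫ := by
      rw [← hPww]
      exact Finset.sum_nonneg fun i _ => mul_nonneg (hω i).le (sq_nonneg _)
    have hS0 : (0:ℝ) ≤ ∑ i ∈ I, ω i * ‖(ContinuousLinearMap.adjoint (R i)) e‖ ^ 2 :=
      Finset.sum_nonneg fun i _ => hf0 i
    have hCS : ⟪Q (D I), D I⟫ ≤ ∑ i ∈ I,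
        (Real.sqrt (ω i) * ‖(ContinuousLinearMap.adjoint (R i)) (Q (D I))‖) *
        (Real.sqrt (ω i) * ‖(ContinuousLinearMap.adjoint (R i)) e‖) := by
      rw [ht_eq]
      refine Finset.sum_le_sum fun i _ => ?_
      have h1 : ⟪(ContinuousLinearMap.adjoint (R i)) (Q (D I)),
          (ContinuousLinearMap.adjoint (R i)) e⟫
          ≤ ‖(ContinuousLinearMap.adjoint (R i)) (Q (D I))‖ *
            ‖(ContinuousLinearMap.adjoint (R i)) e‖ := real_inner_le_norm _ _
      have h2 : Real.sqrt (ω i) * Real.sqrt (ω i) = ω i := Real.mul_self_sqrt (hω i).le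
      calc ω i * ⟪(ContinuousLinearMap.adjoint (R i)) (Q (D I)),
              (ContinuousLinearMap.adjoint (R i)) e⟫
          ≤ ω i * (‖(ContinuousLinearMap.adjoint (R i)) (Q (D I))‖ *
              ‖(ContinuousLinearMap.adjoint (R i)) e‖) :=
            mul_le_mul_of_nonneg_left h1 (hω i).le
        _ = (Real.sqrt (ω i) * ‖(ContinuousLinearMap.adjoint (R i)) (Q (D I))‖) *
              (Real.sqrt (ω i) * ‖(ContinuousLinearMap.adjoint (R i)) e‖) := by
            linear_combination (-(‖(ContinuousLinearMap.adjoint (R i)) (Q (D I))‖ *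
              ‖(ContinuousLinearMap.adjoint (R i)) e‖)) * h2
    have hA : ∑ i ∈ I, ω i * ‖(ContinuousLinearMap.adjoint (R i)) (Q (D I))‖ ^ 2
        ≤ ⟪Q (D I), D I⟫ := by
      rw [← hPww]
      exact Finset.sum_le_univ_sum_of_nonneg fun i => mul_nonneg (hω i).le (sq_nonneg _)
    have h2 : (∑ i ∈ I,
        (Real.sqrt (ω i) * ‖(ContinuousLinearMap.adjoint (R i)) (Q (D I))‖) *
        (Real.sqrt (ω i) * ‖(ContinuousLinearMap.adjoint (R i)) e‖)) ^ 2
        ≤ (∑ i ∈ I, ω i * ‖(ContinuousLinearMap.adjoint (R i)) (Q (D I))‖ ^ 2) *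
          (∑ i ∈ I, ω i * ‖(ContinuousLinearMap.adjoint (R i)) e‖ ^ 2) := by
      have hcs := Finset.sum_mul_sq_le_sq_mul_sq I
        (fun i => Real.sqrt (ω i) * ‖(ContinuousLinearMap.adjoint (R i)) (Q (D I))‖)
        (fun i => Real.sqrt (ω i) * ‖(ContinuousLinearMap.adjoint (R i)) e‖)
      calc (∑ i ∈ I, (Real.sqrt (ω i) * ‖(ContinuousLinearMap.adjoint (R i)) (Q (D I))‖) *
              (Real.sqrt (ω i) * ‖(ContinuousLinearMap.adjoint (R i)) e‖)) ^ 2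
          ≤ (∑ i ∈ I, (Real.sqrt (ω i) * ‖(ContinuousLinearMap.adjoint (R i)) (Q (D I))‖) ^ 2) *
            (∑ i ∈ I, (Real.sqrt (ω i) * ‖(ContinuousLinearMap.adjoint (R i)) e‖) ^ 2) := hcs
        _ = (∑ i ∈ I, ω i * ‖(ContinuousLinearMap.adjoint (R i)) (Q (D I))‖ ^ 2) *
            (∑ i ∈ I, ω i * ‖(ContinuousLinearMap.adjoint (R i)) e‖ ^ 2) := by
            congr 1 <;>
              exact Finset.sum_congr rfl fun i _ => by
                rw [mul_pow, Real.sq_sqrt (hω i).le]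
    exact bound_A3_aux ht0 hS0 hCS hA h2
  -- Step C: summation and counting
  have swap : ∑ I ∈ Finset.powersetCard p (Finset.univ : Finset (Fin (n+1))),
        ∑ i ∈ I, ω i * ‖(ContinuousLinearMap.adjoint (R i)) e‖ ^ 2
      = ∑ i, ((n.choose (p-1) : ℝ)) *
          (ω i * ‖(ContinuousLinearMap.adjoint (R i)) e‖ ^ 2) := by
    calc ∑ I ∈ Finset.powersetCard p (Finset.univ : Finset (Fin (n+1))),
          ∑ i ∈ I, ω i * ‖(ContinuousLinearMap.adjoint (R i)) e‖ ^ 2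
        = ∑ I ∈ Finset.powersetCard p (Finset.univ : Finset (Fin (n+1))),
            ∑ i, (if i ∈ I then ω i * ‖(ContinuousLinearMap.adjoint (R i)) e‖ ^ 2 else 0) := by
          refine Finset.sum_congr rfl fun I hI => ?_
          rw [Finset.sum_ite_mem, Finset.univ_inter]
      _ = ∑ i, ∑ I ∈ Finset.powersetCard p (Finset.univ : Finset (Fin (n+1))),
            (if i ∈ I then ω i * ‖(ContinuousLinearMap.adjoint (R i)) e‖ ^ 2 else 0) :=
          Finset.sum_comm
      _ = ∑ i, ((n.choose (p-1) : ℝ)) *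
            (ω i * ‖(ContinuousLinearMap.adjoint (R i)) e‖ ^ 2) := by
          refine Finset.sum_congr rfl fun i _ => ?_
          rw [← Finset.sum_filter, Finset.sum_const, bound_A3_count hp1 i, nsmul_eq_mul]
  have hsum : ∑ I ∈ Finset.powersetCard p (Finset.univ : Finset (Fin (n+1))),
        ⟪Q (D I), D I⟫
      ≤ (n.choose (p-1) : ℝ) *
          ∑ i, ω i * ‖(ContinuousLinearMap.adjoint (R i)) e‖ ^ 2 := by
    calc ∑ I ∈ Finset.powersetCard p (Finset.univ : Finset (Fin (n+1))), ⟪Q (D I), D I⟫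
        ≤ ∑ I ∈ Finset.powersetCard p (Finset.univ : Finset (Fin (n+1))),
            ∑ i ∈ I, ω i * ‖(ContinuousLinearMap.adjoint (R i)) e‖ ^ 2 :=
          Finset.sum_le_sum fun I _ => stepB I
      _ = (n.choose (p-1) : ℝ) *
            ∑ i, ω i * ‖(ContinuousLinearMap.adjoint (R i)) e‖ ^ 2 := by
          rw [swap, Finset.mul_sum]
  have hM0 : (0:ℝ) ≤ ∑ i, ω i * ‖(ContinuousLinearMap.adjoint (R i)) e‖ ^ 2 :=
    Finset.sum_nonneg fun i _ => hf0 i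
  have hCpos : (0:ℝ) < ((n + 1).choose p : ℝ) := by exact_mod_cast Nat.choose_pos hp2
  have hn1 : (0:ℝ) < (n:ℝ) + 1 := by positivity
  have hkeyN : (n+1) * n.choose (p-1) = (n+1).choose p * p := by
    have h := Nat.add_one_mul_choose_eq n (p-1)
    have hpp : p - 1 + 1 = p := by omega
    simpa [Nat.succ_eq_add_one, hpp] using h
  have hkey : ((n:ℝ) + 1) * (n.choose (p-1) : ℝ) = ((n + 1).choose p : ℝ) * p := by
    exact_mod_cast hkeyN
  have hratio : (((n + 1).choose p : ℝ))⁻¹ * (n.choose (p-1) : ℝ) = (p:ℝ) / ((n:ℝ) + 1) := by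
    rw [inv_mul_eq_div, div_eq_div_iff hCpos.ne' hn1.ne']
    linarith [hkey]
  rw [stepA e]
  calc (((n + 1).choose p : ℝ))⁻¹ *
        ∑ I ∈ Finset.powersetCard p (Finset.univ : Finset (Fin (n+1))), ⟪Q (D I), D I⟫
      ≤ (((n + 1).choose p : ℝ))⁻¹ * ((n.choose (p-1) : ℝ) *
          ∑ i, ω i * ‖(ContinuousLinearMap.adjoint (R i)) e‖ ^ 2) :=
        mul_le_mul_of_nonneg_left hsum (inv_nonneg.2 hCpos.le)
    _ = ((p : ℝ) / ((n:ℝ) + 1)) *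
          ∑ i, ω i * ‖(ContinuousLinearMap.adjoint (R i)) e‖ ^ 2 := by
        rw [← mul_assoc, hratio]
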